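/- Let T = {T_t}_{t∈ℝ} and S = {S_t}_{t∈ℝ} be measurable measure-preserving flows on standard probability Borel spaces (X, μ) and (Y, ν) respectively, and suppose T and S are spectrally isomorphic, i.e., there is a unitary operator U : L²(Y, ν) → L²(X, μ) with U∘U^S_t = U^T_t∘U for all t ∈ ℝ, where U^T_t f = f∘T_t and U^S_t g = g∘S_t are the Koopman operators. If T is partially rigid along a sequence t_n → ∞ with rigidity constant a satisfying 1/2 < a ≤ 1, then S is partially rigid along the same sequence {t_n}, with rigidity constant 2a − 1. -/

import Mathlib

open MeasureTheory Filter
open scoped ENNReal RealInnerProductSpace symmDiff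

/-- The constant function `1` as an element of `L²(μ)`. -/
noncomputable def lpOne {X : Type*} [MeasurableSpace X] (μ : Measure X)
    [IsProbabilityMeasure μ] : Lp ℝ 2 μ := Lp.const 2 μ (1 : ℝ)

/-- A Markov operator on `L²(μ)`: a bounded operator `V` with `V f ≥ 0` whenever
`f ≥ 0`, `V 1 = 1` and `V* 1 = 1`. -/
def IsMarkovOp {X : Type*} [MeasurableSpace X] (μ : Measure X) [IsProbabilityMeasure μ]
    (V : Lp ℝ 2 μ →L[ℝ] Lp ℝ 2 μ) : Prop :=
  (∀ f : Lp ℝ 2 μ, 0 ≤ f → 0 ≤ V f) ∧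
  V (lpOne μ) = lpOne μ ∧
  ContinuousLinearMap.adjoint V (lpOne μ) = lpOne μ

/-- `Φ` belongs to the closure of `S` in the weak operator topology on
bounded operators of `L²(μ)`. -/
def InWOTClosure {X : Type*} [MeasurableSpace X] (μ : Measure X)
    (S : Set (Lp ℝ 2 μ →L[ℝ] Lp ℝ 2 μ)) (Φ : Lp ℝ 2 μ →L[ℝ] Lp ℝ 2 μ) : Prop :=
  ContinuousLinearMapWOT.ofCLM Φ ∈
    closure (ContinuousLinearMapWOT.ofCLM '' S)

/-- The flow `{T_t}` is partially rigid along the sequence `{t_n}` with rigidity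
constant `u`: `liminf_n μ(A ∩ T_{-t_n} A) ≥ u · μ(A)` for every measurable `A`. -/
def PartiallyRigidAlongWith {X : Type*} [MeasurableSpace X] (μ : Measure X)
    (T : ℝ → X → X) (t : ℕ → ℝ) (u : ℝ) : Prop :=
  ∀ A : Set X, MeasurableSet A →
    ENNReal.ofReal u * μ A ≤ Filter.liminf (fun n => μ (A ∩ T (t n) ⁻¹' A)) Filter.atTop

/-- The flow `{T_t}` is partially rigid along the sequence `{t_n}`. -/
def PartiallyRigidAlong {X : Type*} [MeasurableSpace X] (μ : Measure X)
    (T : ℝ → X → X) (t : ℕ → ℝ) : Prop :=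
  ∃ u : ℝ, 0 < u ∧ u ≤ 1 ∧ PartiallyRigidAlongWith μ T t u

/-!
Write `V n` for the Koopman operator of `T (t n)`. Partial rigidity says
`liminf ⟪V n 1_A, 1_A⟫ ≥ a μ(A)`. Koopman operators are positive, so for a nonnegative simple
function `g` the cross terms between different level sets of `g` are nonnegative and the diagonal
terms alone give `liminf ⟪V n g, g⟫ ≥ a ‖g‖²`; monotone approximation extends this to every
nonnegative `f ∈ L²`. For arbitrary `f = f⁺ - f⁻`, orthogonality of `f⁺` and `f⁻` gives
`⟪V f, f⟫ = 2⟪V f⁺, f⁺⟫ + 2⟪V f⁻, f⁻⟫ - ⟪V |f|, |f|⟫`, and since `V` is a contraction the last term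
is at most `‖f‖²`, whence `liminf ⟪V n f, f⟫ ≥ (2a - 1)‖f‖²`. This bound only involves the Koopman
operators, so it passes through the spectral isomorphism to `S`, where `f = 1_B` gives partial
rigidity.
-/

namespace ENNReal

variable {ι : Type*} {l : Filter ι}

theorem liminf_add_liminf_le (u v : ℕ → ℝ≥0∞) :
    liminf u atTop + liminf v atTop ≤ liminf (u + v) atTop := by
  simp only [liminf_eq_iSup_iInf_of_nat]
  refine iSup_add_iSup_le fun N M ↦ le_iSup_of_le (max N M) (le_iInf₂ fun i hi ↦ add_le_add ?_ ?_)
  · exact iInf₂_le i (le_of_max_le_left hi)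
  · exact iInf₂_le i (le_of_max_le_right hi)

theorem sum_liminf_le_liminf_sum {κ : Type*} (s : Finset κ) (u : κ → ℕ → ℝ≥0∞) :
    ∑ k ∈ s, liminf (u k) atTop ≤ liminf (fun n ↦ ∑ k ∈ s, u k n) atTop := by
  classical
  induction s using Finset.induction_on with
  | empty => simp
  | insert k s hk ih =>
    simp only [Finset.sum_insert hk]
    exact (add_le_add le_rfl ih).trans (liminf_add_liminf_le _ _)

theorem ofReal_le_liminf_ofReal {x : ι → ℝ} {b : ℝ} (h : ∀ c < b, ∀ᶠ i in l, c < x i) :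
    ENNReal.ofReal b ≤ liminf (fun i ↦ ENNReal.ofReal (x i)) l :=
  (le_liminf_iff).2 fun c hc ↦ by
    filter_upwards [h c.toReal (toReal_lt_of_lt_ofReal hc)] with i hi
    exact (lt_ofReal_iff_toReal_lt hc.ne_top).2 hi

theorem eventually_lt_of_ofReal_le_liminf_ofReal {x : ι → ℝ} (hx : ∀ i, 0 ≤ x i) {b : ℝ}
    (h : ENNReal.ofReal b ≤ liminf (fun i ↦ ENNReal.ofReal (x i)) l) {c : ℝ} (hc : c < b) :
    ∀ᶠ i in l, c < x i := by
  rcases lt_or_ge c 0 with hc0 | hc0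
  · exact Eventually.of_forall fun i ↦ hc0.trans_le (hx i)
  · filter_upwards [eventually_lt_of_lt_liminf
      (((ofReal_lt_ofReal_iff_of_nonneg hc0).2 hc).trans_le h)] with i hi
    exact (ofReal_lt_ofReal_iff_of_nonneg hc0).1 hi

end ENNReal

theorem ContinuousLinearMap.two_mul_inner_add_two_mul_inner_sub_le_inner_map_sub
    {E : Type*} [NormedAddCommGroup E] [InnerProductSpace ℝ E] {V : E →L[ℝ] E} (hV : ‖V‖ ≤ 1)
    {p q : E} (hpq : ⟪p, q⟫ = 0) :
    2 * ⟪V p, p⟫ + 2 * ⟪V q, q⟫ - ‖p - q‖ ^ 2 ≤ ⟪V (p - q), p - q⟫ := by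
  have hsum : ⟪V (p + q), p + q⟫ ≤ ‖p - q‖ ^ 2 := calc
    ⟪V (p + q), p + q⟫ ≤ ‖V (p + q)‖ * ‖p + q‖ := real_inner_le_norm _ _
    _ ≤ ‖p + q‖ * ‖p + q‖ := by gcongr; exact V.le_of_opNorm_le hV _ |>.trans_eq (one_mul _)
    _ = ‖p - q‖ ^ 2 := by
      rw [← sq, norm_add_sq_real, norm_sub_sq_real, hpq, mul_zero, add_zero, sub_zero]
  have hexpand : ⟪V (p - q), p - q⟫ = 2 * ⟪V p, p⟫ + 2 * ⟪V q, q⟫ - ⟪V (p + q), p + q⟫ := by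
    simp only [map_sub, map_add, inner_sub_left, inner_sub_right, inner_add_left, inner_add_right]
    ring
  linarith

section Koopman

variable {Z : Type*} [MeasurableSpace Z] {ρ : Measure Z}

theorem MeasureTheory.L2.inner_eq_zero_of_inf_eq_zero {f g : Lp ℝ 2 ρ} (hfg : f ⊓ g = 0) :
    ⟪f, g⟫ = 0 := by
  rw [L2.inner_def]
  refine integral_eq_zero_of_ae ?_
  have h0 : ⇑(f ⊓ g) =ᵐ[ρ] (0 : Z → ℝ) := hfg ▸ Lp.coeFn_zero ℝ 2 ρ
  filter_upwards [(Lp.coeFn_inf f g).symm.trans h0] with z hz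
  rcases min_choice (f z) (g z) with h | h <;> simp_all

variable {R : Z → Z} {V : Lp ℝ 2 ρ →L[ℝ] Lp ℝ 2 ρ}

theorem koopman_eq_compMeasurePreserving (hR : MeasurePreserving R ρ ρ)
    (hV : ∀ f : Lp ℝ 2 ρ, V f =ᵐ[ρ] fun z ↦ f (R z)) (f : Lp ℝ 2 ρ) :
    V f = Lp.compMeasurePreserving R hR f :=
  Lp.ext ((hV f).trans (Lp.coeFn_compMeasurePreserving f hR).symm)

theorem opNorm_koopman_le_one (hR : MeasurePreserving R ρ ρ)
    (hV : ∀ f : Lp ℝ 2 ρ, V f =ᵐ[ρ] fun z ↦ f (R z)) : ‖V‖ ≤ 1 :=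
  V.opNorm_le_bound zero_le_one fun f ↦ by
    rw [koopman_eq_compMeasurePreserving hR hV, Lp.norm_compMeasurePreserving, one_mul]

theorem inner_koopman_eq_integral (hV : ∀ f : Lp ℝ 2 ρ, V f =ᵐ[ρ] fun z ↦ f (R z))
    (f g : Lp ℝ 2 ρ) : ⟪V f, g⟫ = ∫ z, f (R z) * g z ∂ρ := by
  rw [L2.inner_def]
  refine integral_congr_ae ?_
  filter_upwards [hV f] with z hz
  simp [hz, mul_comm]

theorem inner_koopman_nonneg (hR : MeasurePreserving R ρ ρ)
    (hV : ∀ f : Lp ℝ 2 ρ, V f =ᵐ[ρ] fun z ↦ f (R z)) {f g : Lp ℝ 2 ρ}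
    (hf : 0 ≤ᵐ[ρ] f) (hg : 0 ≤ᵐ[ρ] g) : 0 ≤ ⟪V f, g⟫ := by
  rw [inner_koopman_eq_integral hV]
  refine integral_nonneg_of_ae ?_
  filter_upwards [hR.quasiMeasurePreserving.ae hf, hg] with z hfz hgz
  exact mul_nonneg hfz hgz

theorem ofReal_inner_koopman (hR : MeasurePreserving R ρ ρ)
    (hV : ∀ f : Lp ℝ 2 ρ, V f =ᵐ[ρ] fun z ↦ f (R z)) {f g : Lp ℝ 2 ρ}
    (hf : 0 ≤ᵐ[ρ] f) (hg : 0 ≤ᵐ[ρ] g) :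
    ENNReal.ofReal ⟪V f, g⟫ = ∫⁻ z, ENNReal.ofReal (f (R z)) * ENNReal.ofReal (g z) ∂ρ := by
  have hint : Integrable (fun z ↦ f (R z) * g z) ρ := by
    refine (L2.integrable_inner (V f) g).congr ?_
    filter_upwards [hV f] with z hz
    simp [hz, mul_comm]
  rw [inner_koopman_eq_integral hV, ofReal_integral_eq_lintegral_ofReal hint]
  · refine lintegral_congr_ae ?_
    filter_upwards [hg] with z hgz
    exact ENNReal.ofReal_mul' hgz
  · filter_upwards [hR.quasiMeasurePreserving.ae hf, hg] with z hfz hgz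
    exact mul_nonneg hfz hgz

theorem inner_koopman_indicatorConstLp_one (hR : MeasurePreserving R ρ ρ)
    (hV : ∀ f : Lp ℝ 2 ρ, V f =ᵐ[ρ] fun z ↦ f (R z)) {A B : Set Z}
    (hA : MeasurableSet A) (hB : MeasurableSet B) (hρA : ρ A ≠ ∞) (hρB : ρ B ≠ ∞) :
    ⟪V (indicatorConstLp 2 hA hρA (1 : ℝ)), indicatorConstLp 2 hB hρB (1 : ℝ)⟫
      = ρ.real (R ⁻¹' A ∩ B) := by
  rw [koopman_eq_compMeasurePreserving hR hV, Lp.indicatorConstLp_compMeasurePreserving]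
  exact L2.inner_indicatorConstLp_one_indicatorConstLp_one (𝕜 := ℝ) _ _ _ _

theorem MeasureTheory.SimpleFunc.sum_sq_mul_measure_inter_preimage_le_lintegral
    (g : SimpleFunc Z ℝ≥0∞) (hR : Measurable R) :
    ∑ d ∈ g.range, d ^ 2 * ρ (g ⁻¹' {d} ∩ R ⁻¹' (g ⁻¹' {d})) ≤ ∫⁻ z, g (R z) * g z ∂ρ := by
  have hdiag (d : ℝ≥0∞) : MeasurableSet (g ⁻¹' {d} ∩ R ⁻¹' (g ⁻¹' {d})) :=
    (g.measurableSet_fiber d).inter (hR (g.measurableSet_fiber d))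
  calc ∑ d ∈ g.range, d ^ 2 * ρ (g ⁻¹' {d} ∩ R ⁻¹' (g ⁻¹' {d}))
      = ∫⁻ z, ∑ d ∈ g.range, (g ⁻¹' {d} ∩ R ⁻¹' (g ⁻¹' {d})).indicator (fun _ ↦ d ^ 2) z ∂ρ := by
        rw [MeasureTheory.lintegral_finsetSum _ fun d _ ↦ measurable_const.indicator (hdiag d)]
        simp only [lintegral_indicator_const (hdiag _)]
    _ ≤ ∫⁻ z, g (R z) * g z ∂ρ := by
        refine MeasureTheory.lintegral_mono fun z ↦ ?_
        -- only the summand `d = g z` can be nonzero, and it is nonzero only if `g (R z) = g z`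
        rw [Finset.sum_eq_single (g z)]
        · by_cases h : g (R z) = g z
          · simp [h, sq]
          · simp [h]
        · intro d _ hd
          simp [Ne.symm hd]
        · exact fun h ↦ absurd (g.mem_range_self z) h

end Koopman

namespace PartiallyRigidAlongWith

variable {Z : Type*} [MeasurableSpace Z] {ρ : Measure Z} {T : ℝ → Z → Z} {t : ℕ → ℝ} {a : ℝ}
  {U : ℝ → Lp ℝ 2 ρ →L[ℝ] Lp ℝ 2 ρ}

theorem le_liminf_lintegral_simpleFunc (h : PartiallyRigidAlongWith ρ T t a)
    (hT : ∀ s, Measurable (T s)) (g : SimpleFunc Z ℝ≥0∞) :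
    ENNReal.ofReal a * ∫⁻ z, g z ^ 2 ∂ρ ≤ liminf (fun n ↦ ∫⁻ z, g (T (t n) z) * g z ∂ρ) atTop :=
  calc ENNReal.ofReal a * ∫⁻ z, g z ^ 2 ∂ρ
      = ∑ d ∈ g.range, d ^ 2 * (ENNReal.ofReal a * ρ (g ⁻¹' {d})) := by
        rw [show (fun z ↦ g z ^ 2) = ⇑(g.map (· ^ 2)) from rfl, SimpleFunc.lintegral_eq_lintegral,
          SimpleFunc.map_lintegral, Finset.mul_sum]
        exact Finset.sum_congr rfl fun d _ ↦ mul_left_comm _ _ _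
    _ ≤ ∑ d ∈ g.range, d ^ 2 * liminf (fun n ↦ ρ (g ⁻¹' {d} ∩ T (t n) ⁻¹' (g ⁻¹' {d}))) atTop := by
        gcongr with d
        exact h _ (g.measurableSet_fiber d)
    _ ≤ ∑ d ∈ g.range, liminf (fun n ↦ d ^ 2 * ρ (g ⁻¹' {d} ∩ T (t n) ⁻¹' (g ⁻¹' {d}))) atTop := by
        gcongr with d
        have := ENNReal.le_liminf_mul (u := fun _ ↦ d ^ 2) (f := atTop)
          (v := fun n ↦ ρ (g ⁻¹' {d} ∩ T (t n) ⁻¹' (g ⁻¹' {d})))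
        rwa [liminf_const] at this
    _ ≤ liminf (fun n ↦ ∑ d ∈ g.range, d ^ 2 * ρ (g ⁻¹' {d} ∩ T (t n) ⁻¹' (g ⁻¹' {d}))) atTop :=
        ENNReal.sum_liminf_le_liminf_sum _ _
    _ ≤ liminf (fun n ↦ ∫⁻ z, g (T (t n) z) * g z ∂ρ) atTop :=
        liminf_le_liminf (Eventually.of_forall fun n ↦
          g.sum_sq_mul_measure_inter_preimage_le_lintegral (hT (t n)))

theorem le_liminf_lintegral (h : PartiallyRigidAlongWith ρ T t a) (hT : ∀ s, Measurable (T s))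
    {F : Z → ℝ≥0∞} (hF : Measurable F) :
    ENNReal.ofReal a * ∫⁻ z, F z ^ 2 ∂ρ ≤ liminf (fun n ↦ ∫⁻ z, F (T (t n) z) * F z ∂ρ) atTop := by
  set g := SimpleFunc.eapprox F
  have hgF (k : ℕ) (z : Z) : g k z ≤ F z :=
    (le_iSup (fun k ↦ g k z) k).trans_eq (SimpleFunc.iSup_eapprox_apply hF z)
  have hsq : ∫⁻ z, F z ^ 2 ∂ρ = ⨆ k, ∫⁻ z, g k z ^ 2 ∂ρ := by
    rw [← lintegral_iSup (fun k ↦ (g k).measurable.pow_const 2)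
      fun k l hkl z ↦ pow_le_pow_left₀ zero_le (SimpleFunc.monotone_eapprox F hkl z) 2]
    congr with z
    rw [← ENNReal.iSup_pow, SimpleFunc.iSup_eapprox_apply hF]
  rw [hsq, ENNReal.mul_iSup]
  exact iSup_le fun k ↦ (h.le_liminf_lintegral_simpleFunc hT (g k)).trans <|
    liminf_le_liminf <| Eventually.of_forall fun n ↦
      lintegral_mono fun z ↦ mul_le_mul' (hgF k _) (hgF k z)


theorem eventually_lt_inner_of_nonneg (h : PartiallyRigidAlongWith ρ T t a)
    (hT : ∀ s, MeasurePreserving (T s) ρ ρ)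
    (hU : ∀ s (f : Lp ℝ 2 ρ), U s f =ᵐ[ρ] fun z ↦ f (T s z))
    {f : Lp ℝ 2 ρ} (hf : 0 ≤ᵐ[ρ] f) {c : ℝ} (hc : c < a * ‖f‖ ^ 2) :
    ∀ᶠ n in atTop, c < ⟪U (t n) f, f⟫ := by
  have key := h.le_liminf_lintegral (fun s ↦ (hT s).measurable)
    (Lp.stronglyMeasurable f).measurable.ennreal_ofReal
  have hinner (n : ℕ) : ∫⁻ z, ENNReal.ofReal (f (T (t n) z)) * ENNReal.ofReal (f z) ∂ρ
      = ENNReal.ofReal ⟪U (t n) f, f⟫ :=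
    (ofReal_inner_koopman (hT _) (hU _) hf hf).symm
  have hnorm : ∫⁻ z, ENNReal.ofReal (f z) ^ 2 ∂ρ = ENNReal.ofReal (‖f‖ ^ 2) := by
    simpa [sq, real_inner_self_eq_norm_sq] using
      (ofReal_inner_koopman (MeasurePreserving.id ρ) (V := ContinuousLinearMap.id ℝ _)
        (fun _ ↦ ae_of_all _ fun _ ↦ rfl) hf hf).symm
  simp only [hinner, hnorm, ← ENNReal.ofReal_mul' (sq_nonneg ‖f‖)] at key
  exact ENNReal.eventually_lt_of_ofReal_le_liminf_ofReal
    (fun n ↦ inner_koopman_nonneg (hT _) (hU _) hf hf) key hc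

theorem eventually_lt_inner (h : PartiallyRigidAlongWith ρ T t a)
    (hT : ∀ s, MeasurePreserving (T s) ρ ρ)
    (hU : ∀ s (f : Lp ℝ 2 ρ), U s f =ᵐ[ρ] fun z ↦ f (T s z))
    (f : Lp ℝ 2 ρ) {c : ℝ} (hc : c < (2 * a - 1) * ‖f‖ ^ 2) :
    ∀ᶠ n in atTop, c < ⟪U (t n) f, f⟫ := by
  have horth : ⟪f⁺, f⁻⟫ = 0 := L2.inner_eq_zero_of_inf_eq_zero (posPart_inf_negPart_eq_zero f)
  have hnorm : ‖f‖ ^ 2 = ‖f⁺‖ ^ 2 + ‖f⁻‖ ^ 2 := by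
    conv_lhs => rw [← posPart_sub_negPart f]
    rw [norm_sub_sq_real, horth]
    ring
  set ε := (2 * a - 1) * ‖f‖ ^ 2 - c with hε_def
  have hε : 0 < ε := sub_pos.2 hc
  have hnorm_a : a * ‖f‖ ^ 2 = a * ‖f⁺‖ ^ 2 + a * ‖f⁻‖ ^ 2 := by rw [hnorm, mul_add]
  have hpos := h.eventually_lt_inner_of_nonneg hT hU ((Lp.coeFn_nonneg _).2 (posPart_nonneg f))
    (c := a * ‖f⁺‖ ^ 2 - ε / 4) (by linarith)
  have hneg := h.eventually_lt_inner_of_nonneg hT hU ((Lp.coeFn_nonneg _).2 (negPart_nonneg f))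
    (c := a * ‖f⁻‖ ^ 2 - ε / 4) (by linarith)
  filter_upwards [hpos, hneg] with n hpn hnn
  have := ContinuousLinearMap.two_mul_inner_add_two_mul_inner_sub_le_inner_map_sub
    (opNorm_koopman_le_one (hT (t n)) (hU (t n))) horth
  rw [posPart_sub_negPart] at this
  linarith

end PartiallyRigidAlongWith

theorem stmt14_general {X Y : Type*} [MeasurableSpace X]
    [MeasurableSpace Y]
    (μ : Measure X) (ν : Measure Y) [IsProbabilityMeasure ν]
    (T : ℝ → X → X)
    (hTmp : ∀ t : ℝ, MeasurePreserving (T t) μ μ)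
    (UT : ℝ → (Lp ℝ 2 μ →L[ℝ] Lp ℝ 2 μ))
    (hUT : ∀ (t : ℝ) (f : Lp ℝ 2 μ), (UT t f : X → ℝ) =ᵐ[μ] fun x => (f : X → ℝ) (T t x))
    (S : ℝ → Y → Y)
    (hSmp : ∀ t : ℝ, MeasurePreserving (S t) ν ν)
    (US : ℝ → (Lp ℝ 2 ν →L[ℝ] Lp ℝ 2 ν))
    (hUS : ∀ (t : ℝ) (f : Lp ℝ 2 ν), (US t f : Y → ℝ) =ᵐ[ν] fun y => (f : Y → ℝ) (S t y))
    (W : Lp ℝ 2 ν ≃ₗᵢ[ℝ] Lp ℝ 2 μ)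
    (hW : ∀ (t : ℝ) (f : Lp ℝ 2 ν), W (US t f) = UT t (W f))
    (t : ℕ → ℝ)
    (a : ℝ)
    (hpr : PartiallyRigidAlongWith μ T t a) :
    PartiallyRigidAlongWith ν S t (2 * a - 1) := by
  intro B hB
  set e := indicatorConstLp 2 hB (measure_ne_top ν B) (1 : ℝ)
  have hreturn (n : ℕ) : ν (B ∩ S (t n) ⁻¹' B) = ENNReal.ofReal ⟪UT (t n) (W e), W e⟫ := by
    rw [← hW, LinearIsometryEquiv.inner_map_map,
      inner_koopman_indicatorConstLp_one (hSmp _) (hUS _), Set.inter_comm, ofReal_measureReal]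
  have hnorm : ν B = ENNReal.ofReal (‖W e‖ ^ 2) := by
    rw [LinearIsometryEquiv.norm_map, ← real_inner_self_eq_norm_sq,
      L2.inner_indicatorConstLp_one_indicatorConstLp_one (𝕜 := ℝ), Set.inter_self]
    exact (ofReal_measureReal (measure_ne_top ν B)).symm
  rw [hnorm, ← ENNReal.ofReal_mul' (sq_nonneg _)]
  simp only [hreturn]
  exact ENNReal.ofReal_le_liminf_ofReal fun c hc ↦ hpr.eventually_lt_inner hTmp hUT (W e) hc

/-- Proposition 6.11: if the flows `T` on `(X, μ)` and `S` on `(Y, ν)` are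
spectrally isomorphic and `T` is partially rigid along `t_n → ∞` with rigidity constant
`1/2 < a ≤ 1`, then `S` is partially rigid along the same sequence with rigidity
constant `2a - 1`. -/
theorem stmt14 {X Y : Type*} [MeasurableSpace X] [StandardBorelSpace X]
    [MeasurableSpace Y] [StandardBorelSpace Y]
    (μ : Measure X) [IsProbabilityMeasure μ] (ν : Measure Y) [IsProbabilityMeasure ν]
    (T : ℝ → X → X)
    (hT0 : ∀ x : X, T 0 x = x)
    (hTadd : ∀ s t : ℝ, ∀ x : X, T (s + t) x = T s (T t x))
    (hTmeas : Measurable (Function.uncurry T))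
    (hTmp : ∀ t : ℝ, MeasurePreserving (T t) μ μ)
    (UT : ℝ → (Lp ℝ 2 μ →L[ℝ] Lp ℝ 2 μ))
    (hUT : ∀ (t : ℝ) (f : Lp ℝ 2 μ), (UT t f : X → ℝ) =ᵐ[μ] fun x => (f : X → ℝ) (T t x))
    (hUTcont : ∀ f g : Lp ℝ 2 μ, Continuous fun t : ℝ => ⟪UT t f, g⟫)
    (S : ℝ → Y → Y)
    (hS0 : ∀ y : Y, S 0 y = y)
    (hSadd : ∀ s t : ℝ, ∀ y : Y, S (s + t) y = S s (S t y))
    (hSmeas : Measurable (Function.uncurry S))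
    (hSmp : ∀ t : ℝ, MeasurePreserving (S t) ν ν)
    (US : ℝ → (Lp ℝ 2 ν →L[ℝ] Lp ℝ 2 ν))
    (hUS : ∀ (t : ℝ) (f : Lp ℝ 2 ν), (US t f : Y → ℝ) =ᵐ[ν] fun y => (f : Y → ℝ) (S t y))
    (hUScont : ∀ f g : Lp ℝ 2 ν, Continuous fun t : ℝ => ⟪US t f, g⟫)
    (W : Lp ℝ 2 ν ≃ₗᵢ[ℝ] Lp ℝ 2 μ)
    (hW : ∀ (t : ℝ) (f : Lp ℝ 2 ν), W (US t f) = UT t (W f))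
    (t : ℕ → ℝ) (ht : Tendsto t atTop atTop)
    (a : ℝ) (ha0 : 1 / 2 < a) (ha1 : a ≤ 1)
    (hpr : PartiallyRigidAlongWith μ T t a) :
    PartiallyRigidAlongWith ν S t (2 * a - 1) :=
  stmt14_general μ ν T hTmp UT hUT S hSmp US hUS W hW t a hpr
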